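/- arXiv:2405.16668 — 3 statements merged into one kernel-verified Lean document; each statement's English description precedes it below -/
import Mathlib

section
/- In a finite-horizon undiscounted MDP, the ℓ1 distance between the step-h state visitation distributions of two policies π and π' is bounded by twice the sum over earlier steps of the expected total variation distance between the policies: ||ν^π_h - ν^{π'}_h||_1 ≤ 2 Σ_{i=1}^{h-1} E_{s∼ν^π_i}[ D_TV(π_i(·|s), π'_i(·|s)) ]. -/
/-- in a finite-horizon MDP, the ℓ1 distance between step-h state
visitation distributions is bounded by twice the cumulative expected TV distance
between the policies at earlier steps. -/
theorem stmt_3 {S A : Type*} [Fintype S] [Fintype A] (H : ℕ)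
    (P : ℕ → S → A → S → ℝ) (π π' : ℕ → S → A → ℝ)
    (ν1 : S → ℝ) (ν ν' : ℕ → S → ℝ)
    (hPnn : ∀ h s a s', 0 ≤ P h s a s') (hPsum : ∀ h s a, ∑ s', P h s a s' = 1)
    (hπnn : ∀ h s a, 0 ≤ π h s a) (hπsum : ∀ h s, ∑ a, π h s a = 1)
    (hπ'nn : ∀ h s a, 0 ≤ π' h s a) (hπ'sum : ∀ h s, ∑ a, π' h s a = 1)
    (hν1nn : ∀ s, 0 ≤ ν1 s) (hν1sum : ∑ s, ν1 s = 1)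
    (hν1 : ν 1 = ν1) (hν'1 : ν' 1 = ν1)
    (hνrec : ∀ h s', ν (h + 1) s' = ∑ s, ∑ a, P h s a s' * π h s a * ν h s)
    (hν'rec : ∀ h s', ν' (h + 1) s' = ∑ s, ∑ a, P h s a s' * π' h s a * ν' h s) :
    ∀ h, 1 ≤ h → h ≤ H →
      ∑ s, |ν h s - ν' h s| ≤
        2 * ∑ i ∈ Finset.Ico 1 h,
              ∑ s, ν i s * ((1 / 2) * ∑ a, |π i s a - π' i s a|) := by
  have hνnn : ∀ h, 1 ≤ h → ∀ s, 0 ≤ ν h s := by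
    intro h h1
    induction h, h1 using Nat.le_induction with
    | base => intro s; rw [hν1]; exact hν1nn s
    | succ n hn ih =>
      intro s'
      rw [hνrec]
      refine Finset.sum_nonneg fun s _ => Finset.sum_nonneg fun a _ => ?_
      exact mul_nonneg (mul_nonneg (hPnn _ _ _ _) (hπnn _ _ _)) (ih s)
  intro h h1 hH
  clear hH
  induction h, h1 using Nat.le_induction with
  | base =>
    simp [hν1, hν'1]
  | succ n hn ih =>
    rw [Finset.sum_Ico_succ_top hn, mul_add]
    have hX : ∀ s a, |π n s a * ν n s - π' n s a * ν' n s| ≤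
        |π n s a - π' n s a| * ν n s + π' n s a * |ν n s - ν' n s| := by
      intro s a
      have : π n s a * ν n s - π' n s a * ν' n s
          = (π n s a - π' n s a) * ν n s + π' n s a * (ν n s - ν' n s) := by ring
      rw [this]
      calc |(π n s a - π' n s a) * ν n s + π' n s a * (ν n s - ν' n s)|
          ≤ |(π n s a - π' n s a) * ν n s| + |π' n s a * (ν n s - ν' n s)| := abs_add_le _ _
        _ = |π n s a - π' n s a| * ν n s + π' n s a * |ν n s - ν' n s| := by
            rw [abs_mul, abs_mul, abs_of_nonneg (hνnn n hn s), abs_of_nonneg (hπ'nn n s a)]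
    have step1 : ∀ s', |ν (n+1) s' - ν' (n+1) s'| ≤
        ∑ s, ∑ a, P n s a s' *
          (|π n s a - π' n s a| * ν n s + π' n s a * |ν n s - ν' n s|) := by
      intro s'
      rw [hνrec, hν'rec, ← Finset.sum_sub_distrib]
      refine le_trans (Finset.abs_sum_le_sum_abs _ _) (Finset.sum_le_sum fun s _ => ?_)
      rw [← Finset.sum_sub_distrib]
      refine le_trans (Finset.abs_sum_le_sum_abs _ _) (Finset.sum_le_sum fun a _ => ?_)
      have : P n s a s' * π n s a * ν n s - P n s a s' * π' n s a * ν' n s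
          = P n s a s' * (π n s a * ν n s - π' n s a * ν' n s) := by ring
      rw [this, abs_mul, abs_of_nonneg (hPnn n s a s')]
      exact mul_le_mul_of_nonneg_left (hX s a) (hPnn n s a s')
    have key : ∑ s, |ν (n+1) s - ν' (n+1) s| ≤
        (∑ s, |ν n s - ν' n s|) +
          2 * ∑ s, ν n s * ((1/2 : ℝ) * ∑ a, |π n s a - π' n s a|) := by
      calc ∑ s', |ν (n+1) s' - ν' (n+1) s'|
          ≤ ∑ s', ∑ s, ∑ a, P n s a s' *
              (|π n s a - π' n s a| * ν n s + π' n s a * |ν n s - ν' n s|) :=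
            Finset.sum_le_sum fun s' _ => step1 s'
        _ = ∑ s, ∑ a, (∑ s', P n s a s') *
              (|π n s a - π' n s a| * ν n s + π' n s a * |ν n s - ν' n s|) := by
            rw [Finset.sum_comm]
            refine Finset.sum_congr rfl fun s _ => ?_
            rw [Finset.sum_comm]
            exact Finset.sum_congr rfl fun a _ => (Finset.sum_mul _ _ _).symm
        _ = ∑ s, ∑ a, (|π n s a - π' n s a| * ν n s + π' n s a * |ν n s - ν' n s|) := by
            refine Finset.sum_congr rfl fun s _ => Finset.sum_congr rfl fun a _ => ?_
            rw [hPsum n s a, one_mul]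
        _ = ∑ s, ((∑ a, |π n s a - π' n s a|) * ν n s + (∑ a, π' n s a) * |ν n s - ν' n s|) := by
            refine Finset.sum_congr rfl fun s _ => ?_
            rw [Finset.sum_add_distrib, Finset.sum_mul, Finset.sum_mul]
        _ = (∑ s, |ν n s - ν' n s|) +
              2 * ∑ s, ν n s * ((1/2 : ℝ) * ∑ a, |π n s a - π' n s a|) := by
            rw [Finset.mul_sum, ← Finset.sum_add_distrib]
            refine Finset.sum_congr rfl fun s _ => ?_
            rw [hπ'sum n s]
            ring
    linarith [ih, key]
end

section
/- In a finite-horizon undiscounted MDP, the ℓ1 distance between step-h state-action visitation distributions of two policies π and π' satisfies ||d^π_h - d^{π'}_h||_1 ≤ 2 Σ_{i=1}^{h} E_{s∼ν^π_i}[ D_TV(π_i(·|s), π'_i(·|s)) ] for all h ∈ [H]. -/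
/-!
Split `d_h - d'_h = (ν_h - ν'_h) π'_h + ν_h (π_h - π'_h)`: since `π'_h(·|s)` is a probability
vector, `‖d_h - d'_h‖₁ ≤ ‖ν_h - ν'_h‖₁ + E_{s∼ν_h} ‖π_h(·|s) - π'_h(·|s)‖₁`. Moreover
`ν_{h+1} - ν'_{h+1}` is the image of `d_h - d'_h` under the stochastic kernel `P_h`, which does
not increase the ℓ1 norm. Unrolling from `ν_1 = ν'_1` bounds `‖ν_h - ν'_h‖₁` by the expected
policy distances at steps `1, …, h - 1`, and one more application of the first estimate gives
the claim, the factor 2 being the one between ℓ1 and total variation.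
-/

open Finset

theorem sum_abs_mul_sub_mul_le {A : Type*} [Fintype A] {x y : ℝ} {p q : A → ℝ}
    (hx : 0 ≤ x) (hq : ∀ a, 0 ≤ q a) (hq_sum : ∑ a, q a = 1) :
    ∑ a, |x * p a - y * q a| ≤ |x - y| + x * ∑ a, |p a - q a| := by
  have hterm : ∀ a, |x * p a - y * q a| ≤ x * |p a - q a| + |x - y| * q a := fun a => by
    calc |x * p a - y * q a| = |x * (p a - q a) + (x - y) * q a| := by congr 1; ring
      _ ≤ |x * (p a - q a)| + |(x - y) * q a| := abs_add_le _ _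
      _ = x * |p a - q a| + |x - y| * q a := by
        rw [abs_mul, abs_mul, abs_of_nonneg hx, abs_of_nonneg (hq a)]
  calc ∑ a, |x * p a - y * q a| ≤ ∑ a, (x * |p a - q a| + |x - y| * q a) :=
        sum_le_sum fun a _ => hterm a
    _ = |x - y| + x * ∑ a, |p a - q a| := by
        rw [sum_add_distrib, ← mul_sum, ← mul_sum, hq_sum]
        ring

theorem sum_abs_sum_mul_le_of_stochastic {ι S : Type*} [Fintype ι] [Fintype S]
    (K : ι → S → ℝ) (hK : ∀ i s, 0 ≤ K i s) (hK_sum : ∀ i, ∑ s, K i s = 1) (x : ι → ℝ) :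
    ∑ s, |∑ i, K i s * x i| ≤ ∑ i, |x i| :=
  calc ∑ s, |∑ i, K i s * x i| ≤ ∑ s, ∑ i, K i s * |x i| := by
        refine sum_le_sum fun s _ => (abs_sum_le_sum_abs _ _).trans_eq ?_
        simp_rw [abs_mul, abs_of_nonneg (hK _ s)]
    _ = ∑ i, |x i| := by
        rw [sum_comm]
        simp_rw [← sum_mul, hK_sum, one_mul]

theorem le_add_sum_Ico_of_le_add {D E : ℕ → ℝ} {m : ℕ}
    (hstep : ∀ n, m ≤ n → D (n + 1) ≤ D n + E n) :
    ∀ h, m ≤ h → D h ≤ D m + ∑ i ∈ Ico m h, E i := by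
  intro h hh
  induction h, hh using Nat.le_induction with
  | base => simp
  | succ n hn ih =>
    rw [sum_Ico_succ_top hn, ← add_assoc]
    linarith [hstep n hn]

section Visitation

variable {S A : Type*} [Fintype S] [Fintype A]

theorem visitation_nonneg (P : ℕ → S → A → S → ℝ) (π : ℕ → S → A → ℝ) (ν : ℕ → S → ℝ)
    (hP : ∀ h s a s', 0 ≤ P h s a s') (hπ : ∀ h s a, 0 ≤ π h s a) (hν1 : ∀ s, 0 ≤ ν 1 s)
    (hνrec : ∀ h s', ν (h + 1) s' = ∑ s, ∑ a, P h s a s' * π h s a * ν h s) :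
    ∀ h, 1 ≤ h → ∀ s, 0 ≤ ν h s := by
  intro h hh
  induction h, hh using Nat.le_induction with
  | base => exact hν1
  | succ n _ ih =>
    intro s'
    rw [hνrec]
    exact sum_nonneg fun s _ => sum_nonneg fun a _ =>
      mul_nonneg (mul_nonneg (hP _ _ _ _) (hπ _ _ _)) (ih s)

theorem sum_abs_visitation_succ_sub_le (P : S → A → S → ℝ) (π π' : S → A → ℝ)
    (ν ν' μ μ' : S → ℝ) (hP : ∀ s a s', 0 ≤ P s a s') (hP_sum : ∀ s a, ∑ s', P s a s' = 1)
    (hμ : ∀ s', μ s' = ∑ s, ∑ a, P s a s' * π s a * ν s)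
    (hμ' : ∀ s', μ' s' = ∑ s, ∑ a, P s a s' * π' s a * ν' s) :
    ∑ s', |μ s' - μ' s'| ≤ ∑ s, ∑ a, |ν s * π s a - ν' s * π' s a| := by
  have hdiff : ∀ s', μ s' - μ' s' =
      ∑ sa : S × A, P sa.1 sa.2 s' * (ν sa.1 * π sa.1 sa.2 - ν' sa.1 * π' sa.1 sa.2) := by
    intro s'
    rw [hμ, hμ', Fintype.sum_prod_type' (fun s a =>
      P s a s' * (ν s * π s a - ν' s * π' s a)), ← sum_sub_distrib]
    refine sum_congr rfl fun s _ => ?_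
    rw [← sum_sub_distrib]
    exact sum_congr rfl fun a _ => by ring
  simp_rw [hdiff]
  refine (sum_abs_sum_mul_le_of_stochastic (fun (sa : S × A) s' => P sa.1 sa.2 s')
    (fun sa => hP sa.1 sa.2) (fun sa => hP_sum sa.1 sa.2) _).trans_eq ?_
  exact Fintype.sum_prod_type' (fun s a => |ν s * π s a - ν' s * π' s a|)

end Visitation

theorem stmt_5_general {S A : Type*} [Fintype S] [Fintype A] (H : ℕ)
    (P : ℕ → S → A → S → ℝ) (π π' : ℕ → S → A → ℝ)
    (ν1 : S → ℝ) (ν ν' : ℕ → S → ℝ)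
    (hPnn : ∀ h s a s', 0 ≤ P h s a s') (hPsum : ∀ h s a, ∑ s', P h s a s' = 1)
    (hπnn : ∀ h s a, 0 ≤ π h s a)
    (hπ'nn : ∀ h s a, 0 ≤ π' h s a) (hπ'sum : ∀ h s, ∑ a, π' h s a = 1)
    (hν1nn : ∀ s, 0 ≤ ν1 s)
    (hν1 : ν 1 = ν1) (hν'1 : ν' 1 = ν1)
    (hνrec : ∀ h s', ν (h + 1) s' = ∑ s, ∑ a, P h s a s' * π h s a * ν h s)
    (hν'rec : ∀ h s', ν' (h + 1) s' = ∑ s, ∑ a, P h s a s' * π' h s a * ν' h s) :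
    ∀ h, 1 ≤ h → h ≤ H →
      ∑ s, ∑ a, |ν h s * π h s a - ν' h s * π' h s a| ≤
        2 * ∑ i ∈ Finset.Icc 1 h,
              ∑ s, ν i s * ((1 / 2) * ∑ a, |π i s a - π' i s a|) := by
  intro h hh _
  set D := fun n => ∑ s, |ν n s - ν' n s|
  set E := fun n => ∑ s, ν n s * ∑ a, |π n s a - π' n s a|
  have hν := visitation_nonneg P π ν hPnn hπnn (hν1 ▸ hν1nn) hνrec
  have hsplit : ∀ n, 1 ≤ n → ∑ s, ∑ a, |ν n s * π n s a - ν' n s * π' n s a| ≤ D n + E n :=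
    fun n hn => (sum_le_sum fun s _ => sum_abs_mul_sub_mul_le (hν n hn s) (hπ'nn n s)
      (hπ'sum n s)).trans_eq sum_add_distrib
  have hD : D h ≤ ∑ i ∈ Ico 1 h, E i := by
    have := le_add_sum_Ico_of_le_add (D := D) (E := E) (fun n hn => (sum_abs_visitation_succ_sub_le _ _ _ _ _ _ _
      (hPnn n) (hPsum n) (hνrec n) (hν'rec n)).trans (hsplit n hn)) h hh
    simpa [D, hν1, hν'1] using this
  have hE : 2 * ∑ i ∈ Icc 1 h, ∑ s, ν i s * ((1 / 2) * ∑ a, |π i s a - π' i s a|) =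
      ∑ i ∈ Icc 1 h, E i := by
    rw [mul_sum]
    refine sum_congr rfl fun i _ => ?_
    rw [mul_sum]
    exact sum_congr rfl fun s _ => by ring
  rw [hE, ← Ico_add_one_right_eq_Icc, sum_Ico_succ_top hh]
  linarith [hsplit h hh]

/-- the ℓ1 distance between step-h state-action visitation
distributions is bounded by twice the cumulative expected TV distance up to step h. -/
theorem stmt_5 {S A : Type*} [Fintype S] [Fintype A] (H : ℕ)
    (P : ℕ → S → A → S → ℝ) (π π' : ℕ → S → A → ℝ)
    (ν1 : S → ℝ) (ν ν' : ℕ → S → ℝ)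
    (hPnn : ∀ h s a s', 0 ≤ P h s a s') (hPsum : ∀ h s a, ∑ s', P h s a s' = 1)
    (hπnn : ∀ h s a, 0 ≤ π h s a) (hπsum : ∀ h s, ∑ a, π h s a = 1)
    (hπ'nn : ∀ h s a, 0 ≤ π' h s a) (hπ'sum : ∀ h s, ∑ a, π' h s a = 1)
    (hν1nn : ∀ s, 0 ≤ ν1 s) (hν1sum : ∑ s, ν1 s = 1)
    (hν1 : ν 1 = ν1) (hν'1 : ν' 1 = ν1)
    (hνrec : ∀ h s', ν (h + 1) s' = ∑ s, ∑ a, P h s a s' * π h s a * ν h s)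
    (hν'rec : ∀ h s', ν' (h + 1) s' = ∑ s, ∑ a, P h s a s' * π' h s a * ν' h s) :
    ∀ h, 1 ≤ h → h ≤ H →
      ∑ s, ∑ a, |ν h s * π h s a - ν' h s * π' h s a| ≤
        2 * ∑ i ∈ Finset.Icc 1 h,
              ∑ s, ν i s * ((1 / 2) * ∑ a, |π i s a - π' i s a|) :=
  stmt_5_general H P π π' ν1 ν ν' hPnn hPsum hπnn hπ'nn hπ'sum hν1nn hν1 hν'1 hνrec hν'rec
end

section
/- Consider the exponentiated gradient (mirror descent) policy update π^k_h(a|s) = π^{k-1}_h(a|s) exp(σ Q(s,a)) / T(s) where T(s) = Σ_{a'} π^{k-1}_h(a'|s) exp(σ Q(s,a')) and 0 ≤ Q(s,a) ≤ H. Then for every state s, D_TV(π^k_h(·|s), π^{k-1}_h(·|s)) ≤ |A| σ H, where |A| is the number of actions. -/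
/-- the exponentiated-gradient (mirror descent) update moves the
policy by at most |A|·σ·H in total variation distance. -/
theorem stmt_6 {A : Type*} [Fintype A]
    (πprev πnew : A → ℝ) (Q : A → ℝ) (σ H : ℝ)
    (hσ : 0 < σ)
    (hπpos : ∀ a, 0 < πprev a) (hπsum : ∑ a, πprev a = 1)
    (hQnn : ∀ a, 0 ≤ Q a) (hQub : ∀ a, Q a ≤ H)
    (hnew : ∀ a, πnew a =
      πprev a * Real.exp (σ * Q a) / ∑ a', πprev a' * Real.exp (σ * Q a')) :
    (1 / 2) * ∑ a, |πnew a - πprev a| ≤ (Fintype.card A : ℝ) * σ * H := by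
  have hne : Nonempty A := by
    by_contra h
    rw [not_nonempty_iff] at h
    simp at hπsum
  have hcard : (1 : ℝ) ≤ (Fintype.card A : ℝ) := by
    exact_mod_cast Fintype.card_pos
  have hH : 0 ≤ H := le_trans (hQnn (Classical.arbitrary A)) (hQub _)
  set T : ℝ := ∑ a', πprev a' * Real.exp (σ * Q a') with hT
  have hexp1 : ∀ a, (1 : ℝ) ≤ Real.exp (σ * Q a) := fun a =>
    Real.one_le_exp (mul_nonneg hσ.le (hQnn a))
  have hT1 : (1 : ℝ) ≤ T := by
    rw [← hπsum]
    apply Finset.sum_le_sum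
    intro a _
    nlinarith [hexp1 a, (hπpos a).le]
  have hTpos : 0 < T := lt_of_lt_of_le one_pos hT1
  have hnewsum : ∑ a, πnew a = 1 := by
    simp only [hnew]
    rw [← Finset.sum_div, ← hT, div_self hTpos.ne']
  have habs : ∑ a, |πnew a - πprev a|
      = ∑ a, (πnew a - πprev a) + 2 * ∑ a, max (πprev a - πnew a) 0 := by
    rw [Finset.mul_sum, ← Finset.sum_add_distrib]
    apply Finset.sum_congr rfl
    intro a _
    rcases le_total (πnew a) (πprev a) with h | h
    · rw [abs_of_nonpos (by linarith), max_eq_left (by linarith)]; ring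
    · rw [abs_of_nonneg (by linarith), max_eq_right (by linarith)]; ring
  have hsumdiff : ∑ a, (πnew a - πprev a) = 0 := by
    rw [Finset.sum_sub_distrib, hπsum, hnewsum]; ring
  have hkey : ∀ a, max (πprev a - πnew a) 0 ≤ πprev a * (1 - 1 / T) := by
    intro a
    have h1 : πprev a / T ≤ πnew a := by
      rw [hnew a]
      gcongr
      nlinarith [hexp1 a, (hπpos a).le]
    have hinv : 1 / T ≤ 1 := by
      rw [div_le_one hTpos]; exact hT1
    have h2 : 0 ≤ πprev a * (1 - 1 / T) := by
      apply mul_nonneg (hπpos a).le; linarith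
    apply max_le _ h2
    have h3 : πprev a * (1 - 1 / T) = πprev a - πprev a / T := by ring
    rw [h3]
    linarith
  have hTbound : 1 - 1 / T ≤ σ * H := by
    have hTm1 : T - 1 ≤ σ * H * T := by
      have hsplit : T - 1 = ∑ a, πprev a * (Real.exp (σ * Q a) - 1) := by
        simp only [mul_sub, mul_one, Finset.sum_sub_distrib, hπsum, ← hT]
      rw [hsplit, hT, Finset.mul_sum]
      apply Finset.sum_le_sum
      intro a _
      have hx : 0 ≤ σ * Q a := mul_nonneg hσ.le (hQnn a)
      have hxH : σ * Q a ≤ σ * H := mul_le_mul_of_nonneg_left (hQub a) hσ.le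
      have hpos := Real.exp_pos (σ * Q a)
      have hmul : Real.exp (-(σ * Q a)) * Real.exp (σ * Q a) = 1 := by
        rw [← Real.exp_add]; simp
      have hexm : Real.exp (σ * Q a) - 1 ≤ (σ * Q a) * Real.exp (σ * Q a) := by
        nlinarith [Real.add_one_le_exp (-(σ * Q a)), hmul, hpos]
      have step1 : πprev a * (Real.exp (σ * Q a) - 1)
          ≤ πprev a * ((σ * Q a) * Real.exp (σ * Q a)) :=
        mul_le_mul_of_nonneg_left hexm (hπpos a).le
      have step2 : (σ * Q a) * Real.exp (σ * Q a) ≤ (σ * H) * Real.exp (σ * Q a) :=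
        mul_le_mul_of_nonneg_right hxH hpos.le
      have step3 : πprev a * ((σ * Q a) * Real.exp (σ * Q a))
          ≤ πprev a * ((σ * H) * Real.exp (σ * Q a)) :=
        mul_le_mul_of_nonneg_left step2 (hπpos a).le
      calc πprev a * (Real.exp (σ * Q a) - 1)
          ≤ πprev a * ((σ * H) * Real.exp (σ * Q a)) := le_trans step1 step3
        _ = σ * H * (πprev a * Real.exp (σ * Q a)) := by ring
    have h1 : (1 - σ * H) * T ≤ 1 := by nlinarith
    have h2 : 1 - σ * H ≤ 1 / T := (le_div_iff₀ hTpos).mpr h1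
    linarith
  rw [habs, hsumdiff]
  have hsummax : ∑ a, max (πprev a - πnew a) 0 ≤ 1 - 1 / T := by
    calc ∑ a, max (πprev a - πnew a) 0 ≤ ∑ a, πprev a * (1 - 1 / T) :=
          Finset.sum_le_sum fun a _ => hkey a
      _ = (∑ a, πprev a) * (1 - 1 / T) := by rw [Finset.sum_mul]
      _ = 1 - 1 / T := by rw [hπsum, one_mul]
  calc (1 / 2) * (0 + 2 * ∑ a, max (πprev a - πnew a) 0)
      = ∑ a, max (πprev a - πnew a) 0 := by ring
    _ ≤ σ * H := le_trans hsummax hTbound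
    _ ≤ (Fintype.card A : ℝ) * σ * H := by
        nlinarith [mul_nonneg (sub_nonneg.mpr hcard) (mul_nonneg hσ.le hH)]
end
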